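/- arXiv:1706.09018 — 5 statements merged into one kernel-verified Lean document; each statement's English description precedes it below -/
import Mathlib

section
/- Let A be a set of ordinals, I an ideal on A, λ a regular cardinal, and f⃗ = ⟨f_ξ : ξ < λ⟩ a <_I-increasing sequence of functions from A to the ordinals. If f⃗ is not Ugly, then every I-least upper bound of f⃗ is an I-exact upper bound of f⃗. -/
noncomputable section

namespace PCFPaper

open Set

/-- An ideal on a set `A` of ordinals: a collection of subsets of `A` containing `∅`,
closed under subsets and finite unions, with `A ∉ I`. -/
structure IsIdealOn (A : Set Ordinal.{0}) (I : Set (Set Ordinal.{0})) : Prop where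
  subset_of_mem : ∀ X ∈ I, X ⊆ A
  empty_mem : (∅ : Set Ordinal.{0}) ∈ I
  mem_of_subset : ∀ X ∈ I, ∀ Y, Y ⊆ X → Y ∈ I
  union_mem : ∀ X ∈ I, ∀ Y ∈ I, X ∪ Y ∈ I
  not_mem : A ∉ I

/-- An ultrafilter on the set `A` of ordinals. -/
structure IsUltrafilterOn (A : Set Ordinal.{0}) (D : Set (Set Ordinal.{0})) : Prop where
  subset_of_mem : ∀ X ∈ D, X ⊆ A
  univ_mem : A ∈ D
  empty_not_mem : (∅ : Set Ordinal.{0}) ∉ D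
  superset_mem : ∀ X ∈ D, ∀ Y, X ⊆ Y → Y ⊆ A → Y ∈ D
  inter_mem : ∀ X ∈ D, ∀ Y ∈ D, X ∩ Y ∈ D
  mem_or_compl_mem : ∀ X, X ⊆ A → X ∈ D ∨ A \ X ∈ D

variable (A : Set Ordinal.{0}) (I : Set (Set Ordinal.{0}))

/-- `f <_I g` : the set where `f(a) < g(a)` fails lies in `I`. -/
def ltI (f g : Ordinal.{0} → Ordinal.{0}) : Prop :=
  {a | a ∈ A ∧ ¬ f a < g a} ∈ I

/-- `f ≤_I g` : the set where `f(a) ≤ g(a)` fails lies in `I`. -/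
def leI (f g : Ordinal.{0} → Ordinal.{0}) : Prop :=
  {a | a ∈ A ∧ ¬ f a ≤ g a} ∈ I

/-- `f <_D g` for a filter/ultrafilter `D` : the set where `f(a) < g(a)` lies in `D`. -/
def ltD (f g : Ordinal.{0} → Ordinal.{0}) : Prop :=
  {a | a ∈ A ∧ f a < g a} ∈ I

/-- `f ≤_D g` for a filter/ultrafilter `D`. -/
def leD (f g : Ordinal.{0} → Ordinal.{0}) : Prop :=
  {a | a ∈ A ∧ f a ≤ g a} ∈ I

/-- `B =_I C` : the symmetric difference lies in `I`. -/
def EqModI (B C : Set Ordinal.{0}) : Prop :=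
  (B \ C) ∪ (C \ B) ∈ I

/-- `B` is an `I`-positive subset of `A`. -/
def IsPositive (B : Set Ordinal.{0}) : Prop :=
  B ⊆ A ∧ B ∉ I

/-- `⟨f ξ : ξ < μ⟩` is a `<_I`-increasing sequence of functions. -/
def IncreasingModI (μ : Ordinal.{0}) (f : Ordinal.{0} → Ordinal.{0} → Ordinal.{0}) : Prop :=
  ∀ ξ < μ, ∀ η < μ, ξ < η → ltI A I (f ξ) (f η)

/-- `g` is an `I`-upper bound of the sequence `⟨f ξ : ξ < μ⟩`. -/
def IsUBseq (μ : Ordinal.{0}) (f : Ordinal.{0} → Ordinal.{0} → Ordinal.{0})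
    (g : Ordinal.{0} → Ordinal.{0}) : Prop :=
  ∀ ξ < μ, leI A I (f ξ) g

/-- `g` is an `I`-least upper bound of the sequence `⟨f ξ : ξ < μ⟩`. -/
def IsLUBseq (μ : Ordinal.{0}) (f : Ordinal.{0} → Ordinal.{0} → Ordinal.{0})
    (g : Ordinal.{0} → Ordinal.{0}) : Prop :=
  IsUBseq A I μ f g ∧ ∀ g', IsUBseq A I μ f g' → leI A I g g'

/-- `g` is an `I`-exact upper bound of the sequence `⟨f ξ : ξ < μ⟩` : a least upper
bound such that the sequence is `<_I`-cofinal below `g`. -/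
def IsEUBseq (μ : Ordinal.{0}) (f : Ordinal.{0} → Ordinal.{0} → Ordinal.{0})
    (g : Ordinal.{0} → Ordinal.{0}) : Prop :=
  IsLUBseq A I μ f g ∧ ∀ h : Ordinal.{0} → Ordinal.{0}, ltI A I h g →
    ∃ ξ < μ, leI A I h (f ξ)

/-- `Good_θ` : the sequence has an `I`-exact upper bound `g` with
`{a ∈ A : cf (g a) < θ} ∈ I`. -/
def GoodAt (μ : Ordinal.{0}) (f : Ordinal.{0} → Ordinal.{0} → Ordinal.{0})
    (θ : Cardinal.{0}) : Prop :=
  ∃ g : Ordinal.{0} → Ordinal.{0}, IsEUBseq A I μ f g ∧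
    {a | a ∈ A ∧ Ordinal.cof (g a) < θ} ∈ I

/-- `Bad_θ` : there are sets `S a` of size `< θ` and an ultrafilter `D` disjoint from `I`
such that for each `ξ < μ` some `h ∈ ∏ S a` is sandwiched `f ξ <_D h <_D f η`. -/
def BadAt (μ : Ordinal.{0}) (f : Ordinal.{0} → Ordinal.{0} → Ordinal.{0})
    (θ : Cardinal.{0}) : Prop :=
  ∃ S : Ordinal.{0} → Set Ordinal.{0}, ∃ D : Set (Set Ordinal.{0}),
    (∀ a ∈ A, Cardinal.mk (S a) < Cardinal.lift.{1} θ) ∧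
    IsUltrafilterOn A D ∧ D ∩ I = ∅ ∧
    ∀ ξ < μ, ∃ h : Ordinal.{0} → Ordinal.{0}, (∀ a ∈ A, h a ∈ S a) ∧
      ∃ η < μ, ltD A D (f ξ) h ∧ ltD A D h (f η)

/-- `Ugly` : there is `g : A → ON` such that the sets `t ξ = {a ∈ A : f ξ a > g a}`
do not stabilize modulo `I`. -/
def IsUgly (μ : Ordinal.{0}) (f : Ordinal.{0} → Ordinal.{0} → Ordinal.{0}) : Prop :=
  ∃ g : Ordinal.{0} → Ordinal.{0}, ∀ ξ < μ, ∃ η, ξ < η ∧ η < μ ∧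
    ({a | a ∈ A ∧ g a < f η a} \ {a | a ∈ A ∧ g a < f ξ a}) ∉ I

/-- `I` is `θ`-regular : any `θ`-sequence of `I`-positive sets admits a subfamily of
full size `θ` with nonempty intersection. -/
def ThetaRegular (θ : Cardinal.{0}) : Prop :=
  ∀ As : Ordinal.{0} → Set Ordinal.{0}, (∀ i < θ.ord, IsPositive A I (As i)) →
    ∃ H : Set Ordinal.{0}, H ⊆ Set.Iio θ.ord ∧
      Cardinal.mk H = Cardinal.lift.{1} θ ∧ (⋂ i ∈ H, As i).Nonempty

/-- `reg I` : the least regular `θ` such that `I` is `θ`-regular. -/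
def regI : Cardinal.{0} :=
  sInf {θ : Cardinal.{0} | θ.IsRegular ∧ ThetaRegular A I θ}

/-- `I` is weakly `θ`-saturated : there is no partition of `A` into `θ` many
`I`-positive sets. -/
def WeaklySaturated (θ : Cardinal.{0}) : Prop :=
  ¬ ∃ P : Ordinal.{0} → Set Ordinal.{0},
    (∀ i < θ.ord, IsPositive A I (P i)) ∧
    (∀ i < θ.ord, ∀ j < θ.ord, i ≠ j → Disjoint (P i) (P j)) ∧
    (⋃ i ∈ Set.Iio θ.ord, P i) = A

/-- `wsat I` : the least `θ` such that `I` is weakly `θ`-saturated. -/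
def wsat : Cardinal.{0} :=
  sInf {θ : Cardinal.{0} | WeaklySaturated A I θ}

/-- `I` is `θ`-indecomposable : closed under unions of `⊆`-increasing chains of
length `θ`. -/
def Indecomposable (θ : Cardinal.{0}) : Prop :=
  ∀ B : Ordinal.{0} → Set Ordinal.{0},
    (∀ i < θ.ord, B i ∈ I) →
    (∀ i < θ.ord, ∀ j < θ.ord, i ≤ j → B i ⊆ B j) →
    (⋃ i ∈ Set.Iio θ.ord, B i) ∈ I

/-- `⟨f ξ : ξ ∈ X⟩` is strongly increasing : there are sets `Z ξ ∈ I` witnessing the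
increase everywhere outside of them. -/
def StronglyIncreasing (X : Set Ordinal.{0})
    (f : Ordinal.{0} → Ordinal.{0} → Ordinal.{0}) : Prop :=
  ∃ Z : Ordinal.{0} → Set Ordinal.{0}, (∀ ξ ∈ X, Z ξ ∈ I) ∧
    ∀ η ∈ X, ∀ ξ ∈ X, η < ξ → ∀ a ∈ A \ (Z η ∪ Z ξ), f η a < f ξ a

/-- `(*)_θ` : every unbounded `X ⊆ μ` has a subset of size `θ` on which the sequence is
strongly increasing. -/
def Star (μ : Ordinal.{0}) (θ : Cardinal.{0})
    (f : Ordinal.{0} → Ordinal.{0} → Ordinal.{0}) : Prop :=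
  ∀ X : Set Ordinal.{0}, X ⊆ Set.Iio μ → (∀ α < μ, ∃ ξ ∈ X, α ≤ ξ) →
    ∃ X₀, X₀ ⊆ X ∧ Cardinal.mk X₀ = Cardinal.lift.{1} θ ∧
      StronglyIncreasing A I X₀ f

/-- `E` is a club (closed unbounded) subset of `δ`. -/
def IsClubIn (E : Set Ordinal.{0}) (δ : Ordinal.{0}) : Prop :=
  E ⊆ Set.Iio δ ∧ (∀ α < δ, ∃ β ∈ E, α ≤ β) ∧
  (∀ β < δ, β ≠ 0 → (∀ γ < β, ∃ ε ∈ E, γ < ε ∧ ε < β) → β ∈ E)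

/-- `A` is a set of regular cardinals. -/
def IsRegularCardSet : Prop :=
  ∀ a ∈ A, ∃ c : Cardinal.{0}, c.IsRegular ∧ c.ord = a

/-- `∏ A` : the set of functions `f` with `f a ∈ a` for every `a ∈ A`. -/
def prodSet : Set (Ordinal.{0} → Ordinal.{0}) :=
  {f | ∀ a ∈ A, f a < a}

/-- `(∏ A, ≤_J)` is `λ`-directed : every subset of `∏ A` of cardinality `< λ` has a
`≤_J`-upper bound in `∏ A`. -/
def DirectedMod (lam : Cardinal.{0}) : Prop :=
  ∀ F : Set (Ordinal.{0} → Ordinal.{0}), F ⊆ prodSet A →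
    Cardinal.mk F < Cardinal.lift.{1} lam →
    ∃ g ∈ prodSet A, ∀ f ∈ F, leI A I f g

/-- `cf (∏ A / D)` : the least cardinality of a cofinal subfamily of `∏ A` modulo `D`. -/
def cfProd (D : Set (Set Ordinal.{0})) : Cardinal.{0} :=
  sInf {c : Cardinal.{0} | ∃ F : Ordinal.{0} → Ordinal.{0} → Ordinal.{0},
    (∀ i < c.ord, F i ∈ prodSet A) ∧
    ∀ g ∈ prodSet A, ∃ i < c.ord, leD A D g (F i)}

/-- `pcf_I (A)` : the set of cofinalities `cf (∏ A / D)` for ultrafilters `D` on `A`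
disjoint from `I`. -/
def pcf : Set Cardinal.{0} :=
  {c | ∃ D, IsUltrafilterOn A D ∧ D ∩ I = ∅ ∧ cfProd A D = c}

/-- The ideal `J_{<λ}^I [A]`. -/
def Jlt (lam : Cardinal.{0}) : Set (Set Ordinal.{0}) :=
  {B | B ⊆ A ∧ (B ∈ I ∨
    ∀ D, IsUltrafilterOn A D → D ∩ I = ∅ → B ∈ D → cfProd A D < lam)}

/-- The ideal generated by `J ∪ {B}` (on subsets of `A`). -/
def generatedBy (J : Set (Set Ordinal.{0})) (B : Set Ordinal.{0}) :
    Set (Set Ordinal.{0}) :=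
  {X | X ⊆ A ∧ ∃ Y ∈ J, X ⊆ Y ∪ B}

/-- `cf (∏ A / I)` : least cardinality of a `≤_I`-cofinal subfamily of `∏ A`. -/
def cfProdI : Cardinal.{0} :=
  sInf {c : Cardinal.{0} | ∃ F : Ordinal.{0} → Ordinal.{0} → Ordinal.{0},
    (∀ i < c.ord, F i ∈ prodSet A) ∧
    ∀ g ∈ prodSet A, ∃ i < c.ord, leI A I g (F i)}

/-- A universal cofinal sequence for `λ ∈ pcf_I (A)`. -/
def IsUniversalSequence (lam : Cardinal.{0})
    (f : Ordinal.{0} → Ordinal.{0} → Ordinal.{0}) : Prop :=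
  (∀ ξ < lam.ord, f ξ ∈ prodSet A) ∧
  IncreasingModI A (Jlt A I lam) lam.ord f ∧
  ∀ D, IsUltrafilterOn A D → D ∩ I = ∅ → cfProd A D = lam →
    ∀ g ∈ prodSet A, ∃ ξ < lam.ord, leD A D g (f ξ)

/-! Let `g` be a least upper bound and `h <_I g`. Since the sequence is not ugly, the sets
`{h < f η}` stop growing modulo `I` from some `ξ₀` on. Hence the function that agrees with `g`
on `{h < f ξ₀}` and with `h` elsewhere is still an upper bound, so `g` lies below it modulo `I`.
As `h <_I g`, this forces `{h > f ξ₀} ∈ I`, i.e. `h ≤_I f ξ₀`. -/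

namespace IsIdealOn

variable {A I}

theorem mem_of_subset_union (hI : IsIdealOn A I) {X Y Z : Set Ordinal.{0}} (hX : X ∈ I)
    (hY : Y ∈ I) (hZ : Z ⊆ X ∪ Y) : Z ∈ I :=
  hI.mem_of_subset _ (hI.union_mem _ hX _ hY) _ hZ

theorem leI_of_ltI (hI : IsIdealOn A I) {p q : Ordinal.{0} → Ordinal.{0}}
    (hpq : ltI A I p q) : leI A I p q :=
  hI.mem_of_subset _ hpq _ fun _ ⟨haA, hpq⟩ => ⟨haA, fun hlt => hpq hlt.le⟩

theorem leI_trans (hI : IsIdealOn A I) {p q r : Ordinal.{0} → Ordinal.{0}}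
    (hpq : leI A I p q) (hqr : leI A I q r) : leI A I p r :=
  hI.mem_of_subset_union hpq hqr fun a ⟨haA, hpr⟩ =>
    (le_or_gt (p a) (q a)).elim (fun hle => Or.inr ⟨haA, fun hqr => hpr (hle.trans hqr)⟩)
      fun hlt => Or.inl ⟨haA, hlt.not_ge⟩

end IsIdealOn

variable {A I}

theorem exists_stable_of_not_isUgly {μ : Ordinal.{0}}
    {f : Ordinal.{0} → Ordinal.{0} → Ordinal.{0}} (hf : ¬ IsUgly A I μ f)
    (h : Ordinal.{0} → Ordinal.{0}) :
    ∃ ξ₀ < μ, ∀ η, ξ₀ < η → η < μ →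
      {a | a ∈ A ∧ h a < f η a} \ {a | a ∈ A ∧ h a < f ξ₀ a} ∈ I := by
  unfold IsUgly at hf
  push Not at hf
  exact hf h

theorem isUBseq_ite_of_stable (hI : IsIdealOn A I) {μ ξ₀ : Ordinal.{0}}
    {f : Ordinal.{0} → Ordinal.{0} → Ordinal.{0}} {g h : Ordinal.{0} → Ordinal.{0}}
    (hf : IncreasingModI A I μ f) (hg : IsUBseq A I μ f g) (hξ₀ : ξ₀ < μ)
    (hstab : ∀ η, ξ₀ < η → η < μ →
      {a | a ∈ A ∧ h a < f η a} \ {a | a ∈ A ∧ h a < f ξ₀ a} ∈ I) :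
    IsUBseq A I μ f fun a => if h a < f ξ₀ a then g a else h a := by
  have hub₀ : leI A I (f ξ₀) fun a => if h a < f ξ₀ a then g a else h a := by
    refine hI.mem_of_subset _ (hg ξ₀ hξ₀) _ fun a ⟨haA, hle⟩ => ⟨haA, ?_⟩
    dsimp only at hle
    split_ifs at hle with hlt
    · exact hle
    · exact absurd (not_lt.mp hlt) hle
  intro η hη
  rcases lt_trichotomy η ξ₀ with hlt | rfl | hgt
  · exact hI.leI_trans (hI.leI_of_ltI (hf η hη ξ₀ hξ₀ hlt)) hub₀
  · exact hub₀
  · refine hI.mem_of_subset_union (hg η hη) (hstab η hgt hη) fun a ⟨haA, hle⟩ => ?_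
    dsimp only at hle
    split_ifs at hle with hlt
    · exact Or.inl ⟨haA, hle⟩
    · exact Or.inr ⟨⟨haA, not_le.mp hle⟩, fun hmem => hlt hmem.2⟩

theorem leI_of_ltI_of_leI_ite (hI : IsIdealOn A I) {g h k : Ordinal.{0} → Ordinal.{0}}
    (hhg : ltI A I h g) (hle : leI A I g fun a => if h a < k a then g a else h a) :
    leI A I h k := by
  refine hI.mem_of_subset_union hle hhg fun a ⟨haA, hhk⟩ => ?_
  have hk : ¬ h a < k a := fun hlt => hhk hlt.le
  by_cases hga : h a < g a
  · exact Or.inl ⟨haA, by simpa only [hk, if_false, not_le] using hga⟩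
  · exact Or.inr ⟨haA, hga⟩

theorem lub_is_eub_of_not_ugly_general (A : Set Ordinal.{0}) (I : Set (Set Ordinal.{0}))
    (hI : IsIdealOn A I) (lam : Cardinal.{0})
    (f : Ordinal.{0} → Ordinal.{0} → Ordinal.{0})
    (hf : IncreasingModI A I lam.ord f)
    (hnotugly : ¬ IsUgly A I lam.ord f) :
    ∀ g : Ordinal.{0} → Ordinal.{0},
      IsLUBseq A I lam.ord f g → IsEUBseq A I lam.ord f g := by
  intro g hg
  refine ⟨hg, fun h hhg => ?_⟩
  obtain ⟨ξ₀, hξ₀, hstab⟩ := exists_stable_of_not_isUgly hnotugly h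
  have hub := isUBseq_ite_of_stable hI hf hg.1 hξ₀ hstab
  exact ⟨ξ₀, hξ₀, leI_of_ltI_of_leI_ite hI hhg (hg.2 _ hub)⟩

/-- if the sequence is not ugly, every least upper bound is exact. -/
theorem lub_is_eub_of_not_ugly (A : Set Ordinal.{0}) (I : Set (Set Ordinal.{0}))
    (hI : IsIdealOn A I) (lam : Cardinal.{0}) (hlam : lam.IsRegular)
    (f : Ordinal.{0} → Ordinal.{0} → Ordinal.{0})
    (hf : IncreasingModI A I lam.ord f)
    (hnotugly : ¬ IsUgly A I lam.ord f) :
    ∀ g : Ordinal.{0} → Ordinal.{0},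
      IsLUBseq A I lam.ord f g → IsEUBseq A I lam.ord f g :=
  lub_is_eub_of_not_ugly_general A I hI lam f hf hnotugly

end PCFPaper
end
end

section
/- Let A be a set of ordinals and I an ideal on A. Suppose λ and θ ≤ λ are regular cardinals and f⃗ = ⟨f_ξ : ξ < λ⟩ is a <_I-increasing sequence of functions from A to the ordinals. If f⃗ has an I-exact upper bound f such that {a ∈ A : cf(f(a)) < θ} ∉ I, then f⃗ satisfies Bad_θ. -/
/-!
Let `B = {a ∈ A : cf g(a) < θ}`, an `I`-positive set, and let `D` be an ultrafilter containing
`B` and disjoint from `I`. Each `g(a)` with `a ∈ B` has a cofinal subset `S(a)` of size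
`cf g(a) < θ`. Given `ξ`, choose `h ∈ ∏ S(a)` with `f_{ξ+1}(a) ≤ h(a) < g(a)` on `B` wherever
`f_{ξ+1}(a) < g(a)`. Then `h <_I g`, so exactness gives `η` with `h ≤_I f_η`, and
`f_ξ <_D f_{ξ+1} ≤_D h ≤_D f_η <_D f_{η+1}`.
-/

noncomputable section

namespace PCFPaper

open Set

variable (A : Set Ordinal.{0}) (I : Set (Set Ordinal.{0}))

/-- The quantification `∀ β, ∃ s ∈ S, β < o → …` keeps `S` nonempty, so that an element of `S`
can be chosen for every `β`. -/
theorem _root_.Ordinal.exists_small_cofinal_set (o : Ordinal.{u}) {θ : Cardinal.{u}}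
    (hθ : Cardinal.aleph0 ≤ θ) :
    ∃ S : Set Ordinal.{u}, Cardinal.mk S < Cardinal.lift.{u + 1} θ ∧
      ∀ β, ∃ s ∈ S, β < o → s < o ∧ (o.cof < θ → β ≤ s) := by
  have hθ' : Cardinal.aleph0 ≤ Cardinal.lift.{u + 1} θ := by simpa using hθ
  by_cases hcof : o.cof < θ
  · obtain ⟨s, hs, hmk⟩ := Order.exists_cof_eq (Iio o)
    rw [Ordinal.cof_Iio, ← Ordinal.lift_cof] at hmk
    refine ⟨insert 0 (Subtype.val '' s), ?_, fun β => ?_⟩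
    · calc Cardinal.mk (insert 0 (Subtype.val '' s) : Set Ordinal.{u})
          ≤ Cardinal.mk s + 1 :=
          Cardinal.mk_insert_le.trans (by gcongr; exact Cardinal.mk_image_le)
        _ < Cardinal.lift.{u + 1} θ := by
          rw [hmk]
          exact Cardinal.add_lt_of_lt hθ' (Cardinal.lift_lt.2 hcof)
            (Cardinal.one_lt_aleph0.trans_le hθ')
    · by_cases hβ : β < o
      · obtain ⟨t, ht, hβt⟩ := hs ⟨β, hβ⟩
        exact ⟨t, .inr ⟨t, ht, rfl⟩, fun _ => ⟨t.2, fun _ => hβt⟩⟩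
      · exact ⟨0, mem_insert _ _, fun h => absurd h hβ⟩
  · refine ⟨{0}, ?_, fun β => ⟨0, rfl, fun hβ => ⟨zero_le.trans_lt hβ, fun h => absurd h hcof⟩⟩⟩
    simpa using Cardinal.one_lt_aleph0.trans_le hθ

section

variable {A I}

open Filter

def IsIdealOn.dualFilter (hI : IsIdealOn A I) : Filter Ordinal.{0} :=
  Filter.comk (· ∈ I) hI.empty_mem hI.mem_of_subset hI.union_mem

theorem IsIdealOn.sep_not_mem_iff_eventually (hI : IsIdealOn A I) (p : Ordinal.{0} → Prop) :
    {a | a ∈ A ∧ ¬ p a} ∈ I ↔ ∀ᶠ a in hI.dualFilter, a ∈ A → p a := by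
  simp only [IsIdealOn.dualFilter, Filter.Eventually, mem_comk, compl_ofPred, Classical.not_imp]

theorem IsIdealOn.exists_ultrafilter_le_dualFilter (hI : IsIdealOn A I) {B : Set Ordinal.{0}}
    (hB : B ∉ I) : ∃ U : Ultrafilter Ordinal.{0}, B ∈ U ∧ ↑U ≤ hI.dualFilter := by
  have : (hI.dualFilter ⊓ 𝓟 B).NeBot := by
    refine inf_principal_neBot_iff.2 fun X hX => nonempty_iff_ne_empty.2 fun hXB => hB ?_
    exact hI.mem_of_subset _ hX _ fun a ha haX => (eq_empty_iff_forall_notMem.1 hXB) a ⟨haX, ha⟩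
  exact ⟨Ultrafilter.of _, le_principal_iff.1 ((Ultrafilter.of_le _).trans inf_le_right),
    (Ultrafilter.of_le _).trans inf_le_left⟩

theorem IncreasingModI.ltI_of_isUBseq (hI : IsIdealOn A I) {μ : Ordinal.{0}}
    (hμ : Order.IsSuccLimit μ) {f : Ordinal.{0} → Ordinal.{0} → Ordinal.{0}}
    {g : Ordinal.{0} → Ordinal.{0}} (hf : IncreasingModI A I μ f) (hg : IsUBseq A I μ f g)
    {ξ : Ordinal.{0}} (hξ : ξ < μ) : ltI A I (f ξ) g := by
  have hξ' : ξ + 1 < μ := by simpa using hμ.succ_lt hξ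
  refine (hI.sep_not_mem_iff_eventually _).2 ?_
  filter_upwards [(hI.sep_not_mem_iff_eventually _).1 (hf ξ hξ _ hξ' (lt_add_one ξ)),
    (hI.sep_not_mem_iff_eventually _).1 (hg _ hξ')] with a h₁ h₂ ha
  exact (h₁ ha).trans_le (h₂ ha)

end

def traceOn (U : Ultrafilter Ordinal.{0}) : Set (Set Ordinal.{0}) :=
  {X | X ⊆ A ∧ X ∈ U}

section

variable {A I} {U : Ultrafilter Ordinal.{0}}

theorem isUltrafilterOn_traceOn (hA : A ∈ U) : IsUltrafilterOn A (traceOn A U) where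
  subset_of_mem _ hX := hX.1
  univ_mem := ⟨subset_rfl, hA⟩
  empty_not_mem h := U.empty_notMem h.2
  superset_mem _ hX _ hXY hYA := ⟨hYA, Filter.mem_of_superset hX.2 hXY⟩
  inter_mem _ hX _ hY := ⟨inter_subset_left.trans hX.1, Filter.inter_mem hX.2 hY.2⟩
  mem_or_compl_mem X hXA := (U.mem_or_compl_mem X).imp (⟨hXA, ·⟩)
    fun h => ⟨sdiff_subset, Filter.inter_mem hA h⟩

theorem traceOn_inter_eq_empty (hI : IsIdealOn A I) (hU : ↑U ≤ hI.dualFilter) :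
    traceOn A U ∩ I = ∅ :=
  eq_empty_iff_forall_notMem.2 fun X ⟨hX, hXI⟩ =>
    U.compl_notMem_iff.2 hX.2 (hU (show Xᶜᶜ ∈ I by rwa [compl_compl]))

theorem ltD_traceOn_of_eventually (hA : A ∈ U) {f g : Ordinal.{0} → Ordinal.{0}}
    (h : ∀ᶠ a in (U : Filter Ordinal.{0}), f a < g a) : ltD A (traceOn A U) f g :=
  ⟨sep_subset _ _, Filter.inter_mem hA h⟩

end

theorem bad_of_eub_small_cof_general (A : Set Ordinal.{0}) (I : Set (Set Ordinal.{0}))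
    (hI : IsIdealOn A I) (lam θ : Cardinal.{0})
    (hlam : lam.IsRegular) (hθ : θ.IsRegular)
    (f : Ordinal.{0} → Ordinal.{0} → Ordinal.{0})
    (hf : IncreasingModI A I lam.ord f)
    (g : Ordinal.{0} → Ordinal.{0}) (hg : IsEUBseq A I lam.ord f g)
    (hpos : {a | a ∈ A ∧ Ordinal.cof (g a) < θ} ∉ I) :
    BadAt A I lam.ord f θ := by
  obtain ⟨⟨hub, -⟩, hexact⟩ := hg
  have hlim := Cardinal.isSuccLimit_ord hlam.aleph0_le
  have hsucc : ∀ ξ < lam.ord, ξ + 1 < lam.ord := fun ξ hξ => by simpa using hlim.succ_lt hξ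
  have hstep : ∀ ξ < lam.ord, ∀ᶠ a in hI.dualFilter, a ∈ A → f ξ a < f (ξ + 1) a :=
    fun ξ hξ => (hI.sep_not_mem_iff_eventually _).1 (hf ξ hξ _ (hsucc ξ hξ) (lt_add_one ξ))
  have hbelow : ∀ ξ < lam.ord, ∀ᶠ a in hI.dualFilter, a ∈ A → f ξ a < g a :=
    fun ξ hξ => (hI.sep_not_mem_iff_eventually _).1 (hf.ltI_of_isUBseq hI hlim hub hξ)
  choose S hSθ hS using fun a => (g a).exists_small_cofinal_set hθ.aleph0_le
  obtain ⟨U, hBU, hUI⟩ := hI.exists_ultrafilter_le_dualFilter hpos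
  have hAU : A ∈ U := Filter.mem_of_superset hBU (sep_subset _ _)
  refine ⟨S, traceOn A U, fun a _ => hSθ a, isUltrafilterOn_traceOn hAU,
    traceOn_inter_eq_empty hI hUI, fun ξ hξ => ?_⟩
  choose h hhS hh using fun a => hS a (f (ξ + 1) a)
  obtain ⟨η, hη, hhη⟩ := hexact h <| (hI.sep_not_mem_iff_eventually _).2 <| by
    filter_upwards [hbelow _ (hsucc ξ hξ)] with a ha haA using (hh a (ha haA)).1
  refine ⟨h, fun a _ => hhS a, η + 1, hsucc η hη, ltD_traceOn_of_eventually hAU ?_,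
    ltD_traceOn_of_eventually hAU ?_⟩
  · filter_upwards [hUI (hstep ξ hξ), hUI (hbelow _ (hsucc ξ hξ)), hBU] with a h₁ h₂ ⟨haA, hcof⟩
    exact (h₁ haA).trans_le ((hh a (h₂ haA)).2 hcof)
  · filter_upwards [hUI ((hI.sep_not_mem_iff_eventually _).1 hhη), hUI (hstep η hη), hAU]
      with a h₁ h₂ haA
    exact (h₁ haA).trans_lt (h₂ haA)

/-- an exact upper bound with `{a ∈ A : cf (g a) < θ} ∉ I` yields `Bad_θ`. -/
theorem bad_of_eub_small_cof (A : Set Ordinal.{0}) (I : Set (Set Ordinal.{0}))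
    (hI : IsIdealOn A I) (lam θ : Cardinal.{0})
    (hlam : lam.IsRegular) (hθ : θ.IsRegular) (hθlam : θ ≤ lam)
    (f : Ordinal.{0} → Ordinal.{0} → Ordinal.{0})
    (hf : IncreasingModI A I lam.ord f)
    (g : Ordinal.{0} → Ordinal.{0}) (hg : IsEUBseq A I lam.ord f g)
    (hpos : {a | a ∈ A ∧ Ordinal.cof (g a) < θ} ∉ I) :
    BadAt A I lam.ord f θ :=
  bad_of_eub_small_cof_general A I hI lam θ hlam hθ f hf g hg hpos

end PCFPaper
end
end

section
/- Let I be an ideal on a set A and θ a regular cardinal. The following are equivalent: (1) I is weakly θ-saturated and θ-indecomposable; (2) whenever ⟨B_i : i < θ⟩ is a ⊆-increasing θ-sequence of subsets of A, there is j* < θ such that for all j with j* ≤ j < θ, B_j =_I ⋃_{i<θ} B_i; (3) whenever ⟨A_i : i < θ⟩ is a sequence of I-positive sets, there is H ⊆ θ with |H| = θ such that ⋂_{i∈H} A_i ≠ ∅. -/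
noncomputable section

namespace PCFPaper

open Set

variable (A : Set Ordinal.{0}) (I : Set (Set Ordinal.{0}))

/-!
Write `U` for the union of an increasing chain `⟨B_i : i < θ⟩`. If `U \ B_j` is positive for
every `j`, indecomposability gives for each `j` some `i` with `B_i \ B_j` positive; iterating
this map `g` continuously, `e ξ = sup_{η < ξ} g (e η)` (which stays below `θ` by regularity),
the differences `B_{g (e ξ)} \ B_{e ξ}` are `θ` disjoint positive sets, and adding the rest of
`A` to one of them contradicts weak saturation. Conversely, applied to the chain of initial
unions of a partition, (2) yields a positive piece inside an `I`-small set, and applied to a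
chain from `I` it gives indecomposability. For (3), if no point lies in `θ` of the positive sets
`A_i`, each `a` lies in no `A_i` with `i` beyond some `β_a < θ`, and the chain
`B_j = {a | β_a ≤ j}` exhausts `A` without ever being `I`-equal to it. Finally (3) gives (2):
a point in `θ` many of the sets `U \ B_j` lies in `U`, yet outside cofinally many `B_j`.
-/

section Cardinality

theorem mk_le_lift_card_of_subset_Iio {s : Set Ordinal.{0}} {o : Ordinal.{0}} (hs : s ⊆ Iio o) :
    Cardinal.mk s ≤ Cardinal.lift.{1} o.card :=
  (Cardinal.mk_le_mk_of_subset hs).trans_eq (Cardinal.mk_Iio_ordinal o)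

variable {θ : Cardinal.{0}}

theorem exists_lt_ord_subset_Iio_of_mk_lt (hθ : θ.IsRegular) {s : Set Ordinal.{0}}
    (hs : s ⊆ Iio θ.ord) (hcard : Cardinal.mk s < Cardinal.lift.{1} θ) :
    ∃ β < θ.ord, s ⊆ Iio β := by
  have hbdd : BddAbove ((· + 1) '' s) :=
    ⟨θ.ord, forall_mem_image.mpr fun x hx => Order.add_one_le_of_lt (hs hx)⟩
  refine ⟨sSup ((· + 1) '' s), Ordinal.sSup_add_one_lt_of_lt_cof ?_ hs, fun x hx => ?_⟩
  · rwa [← Ordinal.lift_cof, hθ.cof_ord]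
  · exact (Order.lt_add_one_iff.mpr le_rfl).trans_le (le_csSup hbdd (mem_image_of_mem _ hx))

theorem exists_mem_le_of_mk_eq {H : Set Ordinal.{0}} (hH : Cardinal.mk H = Cardinal.lift.{1} θ)
    {j : Ordinal.{0}} (hj : j < θ.ord) : ∃ i ∈ H, j ≤ i := by
  by_contra! h
  have hle := mk_le_lift_card_of_subset_Iio (s := H) h
  rw [hH, Cardinal.lift_le] at hle
  exact (Cardinal.lt_ord.mp hj).not_ge hle

end Cardinality

def supIterate (g : Ordinal.{0} → Ordinal.{0}) (ξ : Ordinal.{0}) : Ordinal.{0} :=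
  ⨆ η : Iio ξ, g (supIterate g η)
termination_by ξ
decreasing_by exact η.2

theorem le_supIterate (g : Ordinal.{0} → Ordinal.{0}) {η ξ : Ordinal.{0}} (h : η < ξ) :
    g (supIterate g η) ≤ supIterate g ξ := by
  rw [supIterate.eq_def g ξ]
  exact le_ciSup Ordinal.bddAbove_of_small (⟨η, h⟩ : Iio ξ)

theorem supIterate_lt_ord {θ : Cardinal.{0}} (hθ : θ.IsRegular) {g : Ordinal.{0} → Ordinal.{0}}
    (hg : ∀ j < θ.ord, g j < θ.ord) {ξ : Ordinal.{0}} (hξ : ξ < θ.ord) :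
    supIterate g ξ < θ.ord := by
  induction ξ using WellFoundedLT.induction with
  | _ ξ ih =>
    rw [supIterate.eq_def g ξ]
    refine Ordinal.lift_iSup_lt_of_lt_cof ?_ fun η => hg _ (ih η η.2 (η.2.trans hξ))
    rwa [Cardinal.mk_Iio_ordinal, ← Ordinal.lift_cof, hθ.cof_ord, Cardinal.lift_lift,
      Cardinal.lift_lt, ← Cardinal.lt_ord]

section Ideal

variable {A I} {θ : Cardinal.{0}}

/-- Clause (2) of the theorem: `B k =_I ⋃ B` for all `k ≥ j` as soon as `(⋃ B) \ B j ∈ I`. -/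
def ChainsStabilize (A : Set Ordinal.{0}) (I : Set (Set Ordinal.{0})) (θ : Cardinal.{0}) : Prop :=
  ∀ B : Ordinal.{0} → Set Ordinal.{0}, (∀ i < θ.ord, B i ⊆ A) → MonotoneOn B (Iio θ.ord) →
    ∃ j < θ.ord, (⋃ i ∈ Iio θ.ord, B i) \ B j ∈ I

theorem chainsStabilize_iff (hI : IsIdealOn A I) :
    ChainsStabilize A I θ ↔ ∀ B : Ordinal.{0} → Set Ordinal.{0},
        (∀ i < θ.ord, B i ⊆ A) →
        (∀ i < θ.ord, ∀ j < θ.ord, i ≤ j → B i ⊆ B j) →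
        ∃ j' < θ.ord, ∀ j, j' ≤ j → j < θ.ord →
          EqModI I (B j) (⋃ i ∈ Set.Iio θ.ord, B i) := by
  refine forall_congr' fun B => imp_congr_right fun _ => forall_congr' fun hB => ?_
  have hBU : ∀ j < θ.ord, B j \ ⋃ i ∈ Iio θ.ord, B i = ∅ := fun j hj =>
    sdiff_eq_bot_iff.mpr (subset_biUnion_of_mem (u := B) hj)
  constructor
  · rintro ⟨j', hj', hsmall⟩
    refine ⟨j', hj', fun j hj'j hj => ?_⟩
    rw [EqModI, hBU j hj, empty_union]
    exact hI.mem_of_subset _ hsmall _ (sdiff_subset_sdiff_right (hB hj' hj hj'j))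
  · rintro ⟨j, hj, heq⟩
    refine ⟨j, hj, ?_⟩
    simpa only [EqModI, hBU j hj, empty_union] using heq j le_rfl hj

theorem WeaklySaturated.not_exists_pairwiseDisjoint (hI : IsIdealOn A I) (hθ : θ ≠ 0)
    (hws : WeaklySaturated A I θ) :
    ¬ ∃ P : Ordinal.{0} → Set Ordinal.{0},
      (∀ i < θ.ord, IsPositive A I (P i)) ∧ (Iio θ.ord).PairwiseDisjoint P := by
  rintro ⟨P, hpos, hdisj⟩
  have h0 : (0 : Ordinal.{0}) < θ.ord := Cardinal.ord_pos.mpr (pos_iff_ne_zero.mpr hθ)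
  set W := ⋃ i ∈ Iio θ.ord, P i
  set Q := Function.update P 0 (P 0 ∪ (A \ W))
  have hPQ : ∀ i, P i ⊆ Q i := fun i => by
    rcases eq_or_ne i 0 with rfl | hi
    · simp [Q]
    · simp [Q, hi]
  have hQA : ∀ i < θ.ord, Q i ⊆ A := fun i hi => by
    rcases eq_or_ne i 0 with rfl | hi0
    · simpa [Q] using (hpos 0 h0).1
    · simpa [Q, hi0] using (hpos i hi).1
  refine hws ⟨Q,
    fun i hi => ⟨hQA i hi, fun hQ => (hpos i hi).2 (hI.mem_of_subset _ hQ _ (hPQ i))⟩,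
    fun i hi j hj hij => ?_, ?_⟩
  · wlog hj0 : j ≠ 0 generalizing i j
    exact (this j hj i hi hij.symm (not_not.mp hj0 ▸ hij)).symm
    rw [show Q j = P j by simp [Q, hj0]]
    rcases eq_or_ne i 0 with rfl | hi0
    · simp only [Q, Function.update_self, disjoint_union_left]
      exact ⟨hdisj hi hj hij, disjoint_sdiff_left.mono_right (subset_biUnion_of_mem (u := P) hj)⟩
    · simpa [Q, hi0] using hdisj hi hj hij
  · refine subset_antisymm (iUnion₂_subset hQA) fun x hx => ?_
    by_cases hxW : x ∈ W
    · obtain ⟨i, hi, hxi⟩ := mem_iUnion₂.mp hxW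
      exact mem_biUnion hi (hPQ i hxi)
    · exact mem_biUnion (mem_Iio.mpr h0) (show x ∈ Q 0 by simp [Q, hx, hxW])

theorem exists_pairwiseDisjoint_of_chain (hθ : θ.IsRegular) {B : Ordinal.{0} → Set Ordinal.{0}}
    (hBA : ∀ i < θ.ord, B i ⊆ A) (hB : MonotoneOn B (Iio θ.ord))
    (hnext : ∀ j < θ.ord, ∃ i < θ.ord, B i \ B j ∉ I) :
    ∃ P : Ordinal.{0} → Set Ordinal.{0},
      (∀ i < θ.ord, IsPositive A I (P i)) ∧ (Iio θ.ord).PairwiseDisjoint P := by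
  choose! g hg_lt hg_pos using hnext
  have he : ∀ ξ < θ.ord, supIterate g ξ < θ.ord := fun ξ => supIterate_lt_ord hθ hg_lt
  -- piece `η` lies inside `B (supIterate g ξ)` for `η < ξ`, and piece `ξ` avoids that set
  have hdisj : ∀ η < θ.ord, ∀ ξ < θ.ord, η < ξ → Disjoint
      (B (g (supIterate g η)) \ B (supIterate g η)) (B (g (supIterate g ξ)) \ B (supIterate g ξ)) :=
    fun η hη ξ hξ hηξ => disjoint_sdiff_right.mono_left <| sdiff_subset.trans <|
      hB (hg_lt _ (he η hη)) (he ξ hξ) (le_supIterate g hηξ)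
  refine ⟨fun ξ => B (g (supIterate g ξ)) \ B (supIterate g ξ),
    fun ξ hξ => ⟨sdiff_subset.trans (hBA _ (hg_lt _ (he ξ hξ))), hg_pos _ (he ξ hξ)⟩,
    fun η hη ξ hξ hne => ?_⟩
  rcases hne.lt_or_gt with h | h
  · exact hdisj η hη ξ hξ h
  · exact (hdisj ξ hξ η hη h).symm

theorem chainsStabilize_of_weaklySaturated (hI : IsIdealOn A I) (hθ : θ.IsRegular)
    (hws : WeaklySaturated A I θ) (hind : Indecomposable I θ) : ChainsStabilize A I θ := by
  intro B hBA hB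
  by_contra! hpos
  refine hws.not_exists_pairwiseDisjoint hI hθ.pos.ne'
    (exists_pairwiseDisjoint_of_chain hθ hBA hB fun j hj => ?_)
  by_contra! hsmall
  refine hpos j hj ?_
  simp only [iUnion_sdiff]
  exact hind _ hsmall fun i hi i' hi' hii' => sdiff_subset_sdiff_left (hB hi hi' hii')

theorem ChainsStabilize.weaklySaturated (hI : IsIdealOn A I) (hθ : θ.IsRegular)
    (h : ChainsStabilize A I θ) : WeaklySaturated A I θ := by
  rintro ⟨P, hpos, hdisj, -⟩
  obtain ⟨j, hj, hsmall⟩ := h (fun j => ⋃ i ∈ Iio j, P i)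
    (fun j hj => iUnion₂_subset fun i hi => (hpos i (lt_trans hi hj)).1)
    (fun i _ j _ hij => biUnion_subset_biUnion_left (Iio_subset_Iio hij))
  refine (hpos j hj).2 (hI.mem_of_subset _ hsmall _ fun x hx => ⟨?_, ?_⟩)
  · have hsucc : Order.succ j < θ.ord := (Cardinal.isSuccLimit_ord hθ.aleph0_le).succ_lt hj
    exact mem_biUnion hsucc (mem_biUnion (Order.lt_succ j) hx)
  · simp only [mem_iUnion₂, not_exists]
    exact fun i hi hxi => disjoint_left.mp (hdisj i (lt_trans hi hj) j hj (ne_of_lt hi)) hxi hx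

theorem ChainsStabilize.indecomposable (hI : IsIdealOn A I) (h : ChainsStabilize A I θ) :
    Indecomposable I θ := by
  intro B hBI hB
  obtain ⟨j, hj, hsmall⟩ := h B (fun i hi => hI.subset_of_mem _ (hBI i hi)) hB
  exact hI.mem_of_subset _ (hI.union_mem _ (hBI j hj) _ hsmall) _ (sdiff_subset_iff.mp subset_rfl)

theorem ChainsStabilize.thetaRegular (hI : IsIdealOn A I) (hθ : θ.IsRegular)
    (h : ChainsStabilize A I θ) : ThetaRegular A I θ := by
  intro As hpos
  by_contra! hempty
  -- each point lies in fewer than `θ` of the sets, hence in none beyond some `β < θ`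
  have hbound : ∀ a, ∃ β < θ.ord, {i | i < θ.ord ∧ a ∈ As i} ⊆ Iio β := fun a => by
    refine exists_lt_ord_subset_Iio_of_mk_lt hθ (fun i hi => hi.1) <|
      ((mk_le_lift_card_of_subset_Iio fun i hi => hi.1).trans_eq ?_).lt_of_ne fun hcard => ?_
    · rw [Cardinal.card_ord]
    · exact notMem_empty a <|
        (hempty _ (fun i hi => hi.1) hcard).subset (mem_iInter₂.mpr fun i hi => hi.2)
  obtain ⟨j, hj, hsmall⟩ := h (fun j => {a ∈ A | ∀ i < θ.ord, a ∈ As i → i < j})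
    (fun _ _ => sep_subset _ _)
    (fun i _ j _ hij a ha => ⟨ha.1, fun k hk hak => (ha.2 k hk hak).trans_le hij⟩)
  refine (hpos j hj).2 (hI.mem_of_subset _ hsmall _ fun a ha => ⟨?_, fun ha' => ?_⟩)
  · obtain ⟨β, hβ, hβa⟩ := hbound a
    exact mem_biUnion hβ ⟨(hpos j hj).1 ha, fun i hi hai => hβa ⟨hi, hai⟩⟩
  · exact lt_irrefl j (ha'.2 j hj ha)

theorem ThetaRegular.chainsStabilize (hθ : θ ≠ 0) (h : ThetaRegular A I θ) :
    ChainsStabilize A I θ := by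
  intro B hBA hB
  by_contra! hpos
  set U := ⋃ i ∈ Iio θ.ord, B i
  obtain ⟨H, hHθ, hH, x, hx⟩ := h (fun j => U \ B j)
    fun j hj => ⟨sdiff_subset.trans (iUnion₂_subset hBA), hpos j hj⟩
  rw [mem_iInter₂] at hx
  obtain ⟨i₀, hi₀⟩ := exists_mem_le_of_mk_eq hH (Cardinal.ord_pos.mpr (pos_iff_ne_zero.mpr hθ))
  obtain ⟨j, hj, hxj⟩ := mem_iUnion₂.mp (hx i₀ hi₀.1).1
  obtain ⟨i, hiH, hji⟩ := exists_mem_le_of_mk_eq hH hj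
  exact (hx i hiH).2 (hB hj (hHθ hiH) hji hxj)

end Ideal

/-- equivalent characterizations of `θ`-regularity of an ideal. -/
theorem theta_regular_tfae (A : Set Ordinal.{0}) (I : Set (Set Ordinal.{0}))
    (hI : IsIdealOn A I) (θ : Cardinal.{0}) (hθ : θ.IsRegular) :
    ((WeaklySaturated A I θ ∧ Indecomposable I θ) ↔
      (∀ B : Ordinal.{0} → Set Ordinal.{0},
        (∀ i < θ.ord, B i ⊆ A) →
        (∀ i < θ.ord, ∀ j < θ.ord, i ≤ j → B i ⊆ B j) →
        ∃ j' < θ.ord, ∀ j, j' ≤ j → j < θ.ord →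
          EqModI I (B j) (⋃ i ∈ Set.Iio θ.ord, B i))) ∧
    ((WeaklySaturated A I θ ∧ Indecomposable I θ) ↔ ThetaRegular A I θ) := by
  rw [← chainsStabilize_iff hI]
  have h12 : WeaklySaturated A I θ ∧ Indecomposable I θ → ChainsStabilize A I θ :=
    fun h => chainsStabilize_of_weaklySaturated hI hθ h.1 h.2
  have h21 : ChainsStabilize A I θ → WeaklySaturated A I θ ∧ Indecomposable I θ :=
    fun h => ⟨h.weaklySaturated hI hθ, h.indecomposable hI⟩
  exact ⟨⟨h12, h21⟩, ⟨fun h => (h12 h).thetaRegular hI hθ,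
    fun h => h21 (h.chainsStabilize hθ.pos.ne')⟩⟩

end PCFPaper
end
end

section
/- Let A be a set of ordinals and I an ideal on A with reg(I) < min(A). Let λ > reg(I) be a regular cardinal, let θ ≤ λ be a regular cardinal such that I is θ-regular, and let f⃗ = ⟨f_ξ : ξ < λ⟩ be a <_I-increasing sequence of functions from A to the ordinals. If f⃗ satisfies (*)_θ, then f⃗ is not Bad_θ. -/
noncomputable section

namespace PCFPaper

open Set

variable (A : Set Ordinal.{0}) (I : Set (Set Ordinal.{0}))

/-!
Suppose `f⃗` were `Bad_θ`, witnessed by `S`, `D` and sandwiches `f_ξ <_D h_ξ <_D f_{η ξ}`.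
Since `λ > reg I ≥ ℵ₀` is regular, the closure points of `η` are unbounded in `λ`, so `(*)_θ`
yields `θ` of them on which `f⃗` is strongly increasing with exceptional sets `Z_ξ`. For such
`ξ` with a successor `ξ⁺` among them, the set where the sandwich holds, `f_{η ξ} < f_{ξ⁺}`, and
`Z_ξ`, `Z_{ξ⁺}` are avoided lies in `D`, hence is `I`-positive. By `θ`-regularity some point `a`
lies in `θ` of these sets, and `ξ ↦ h_ξ(a)` is strictly increasing on them, because
`h_ξ(a) < f_{η ξ}(a) < f_{ξ⁺}(a) ≤ f_ζ(a) < h_ζ(a)` for `ξ < ζ`. So `|S(a)| ≥ θ`.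
-/

open Cardinal

universe u

theorem mk_sep_exists_gt_eq {α : Type*} [LinearOrder α] {s : Set α} (hs : ℵ₀ ≤ #s) :
    #{x ∈ s | ∃ y ∈ s, x < y} = #s := by
  set t := {x ∈ s | ∃ y ∈ s, x < y}
  have hts : t ⊆ s := fun _ hx => hx.1
  have hst : #(s \ t : Set α) ≤ 1 := by
    refine Set.Subsingleton.cardinalMk_le_one fun x hx y hy => ?_
    by_contra hne
    rcases lt_or_gt_of_ne hne with hxy | hyx
    · exact hx.2 ⟨hx.1, y, hy.1, hxy⟩
    · exact hy.2 ⟨hy.1, x, hx.1, hyx⟩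
  have hsum : #(s \ t : Set α) + #t = #s := mk_sdiff_add_mk hts
  have ht : ℵ₀ ≤ #t := by
    by_contra! ht
    exact hs.not_gt (hsum ▸ add_lt_aleph0 (hst.trans_lt one_lt_aleph0) ht)
  rw [← hsum, add_eq_right ht (hst.trans (one_le_aleph0.trans ht))]

theorem mk_le_mk_of_injOn_mapsTo {α β : Type u} {s : Set α} {t : Set β} {g : α → β} (hinj : InjOn g s)
    (hmaps : MapsTo g s t) : #s ≤ #t :=
  (mk_image_eq_of_injOn g s hinj).ge.trans (mk_le_mk_of_subset hmaps.image_subset)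

theorem exists_closure_point_ge {c : Cardinal.{0}} (hc : c.IsRegular) (hc' : ℵ₀ < c)
    {F : Ordinal.{0} → Ordinal.{0}} (hF : ∀ ρ < c.ord, F ρ < c.ord) :
    ∀ α < c.ord, ∃ ξ ∈ {ξ | ξ < c.ord ∧ ∀ ρ < ξ, F ρ < ξ}, α ≤ ξ := by
  intro α hα
  let G : Ordinal.{0} → Ordinal.{0} := fun β => ⨆ ρ : Iio β, F ρ + 1
  have hFG : ∀ β, ∀ ρ < β, F ρ < G β := fun β ρ hρ =>
    (Order.lt_add_one_iff.2 le_rfl).trans_le (Ordinal.le_iSup (fun ρ : Iio β => F ρ + 1) ⟨ρ, hρ⟩)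
  have hG : ∀ β < c.ord, G β < c.ord := fun β hβ => by
    refine Ordinal.lift_iSup_add_one_lt_of_lt_cof ?_ fun ρ => hF ρ (ρ.2.trans hβ)
    rw [mk_Iio_ordinal, lift_lift, ← Ordinal.lift_cof, hc.cof_ord, lift_lt]
    exact lt_ord.1 hβ
  refine ⟨Ordinal.nfp G α, ⟨nfp_lt_ord_of_isRegular hc hc'.ne' hG hα, fun ρ hρ => ?_⟩,
    Ordinal.le_nfp G α⟩
  obtain ⟨n, hn⟩ := Ordinal.lt_nfp_iff.1 hρ
  calc F ρ < G (G^[n] α) := hFG _ _ hn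
    _ = G^[n + 1] α := (Function.iterate_succ_apply' G n α).symm
    _ ≤ Ordinal.nfp G α := Ordinal.iterate_le_nfp G α (n + 1)

section Ideal

variable {A I} {D : Set (Set Ordinal.{0})}

theorem IsUltrafilterOn.isPositive_of_mem (hD : IsUltrafilterOn A D) (hDI : D ∩ I = ∅)
    {B : Set Ordinal.{0}} (hB : B ∈ D) : IsPositive A I B :=
  ⟨hD.subset_of_mem B hB, fun hBI => (hDI.subset ⟨hB, hBI⟩ : B ∈ (∅ : Set _))⟩

theorem IsUltrafilterOn.diff_mem (hI : IsIdealOn A I) (hD : IsUltrafilterOn A D)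
    (hDI : D ∩ I = ∅) {B : Set Ordinal.{0}} (hB : B ∈ I) : A \ B ∈ D :=
  (hD.mem_or_compl_mem B (hI.subset_of_mem B hB)).resolve_left
    fun hBD => (hD.isPositive_of_mem hDI hBD).2 hB

theorem IsUltrafilterOn.ltD_of_ltI (hI : IsIdealOn A I) (hD : IsUltrafilterOn A D)
    (hDI : D ∩ I = ∅) {u v : Ordinal.{0} → Ordinal.{0}} (h : ltI A I u v) : ltD A D u v := by
  refine hD.superset_mem _ (hD.diff_mem hI hDI h) _ ?_ fun a ha => ha.1
  rintro a ⟨ha, hn⟩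
  exact ⟨ha, by_contra fun hlt => hn ⟨ha, hlt⟩⟩

theorem ThetaRegular.exists_subset_nonempty_biInter {θ : Cardinal.{0}}
    (hθ : ThetaRegular A I θ) {Y : Set Ordinal.{0}} (hY : lift.{1} θ ≤ #Y)
    {B : Ordinal.{0} → Set Ordinal.{0}} (hB : ∀ y ∈ Y, IsPositive A I (B y)) :
    ∃ H ⊆ Y, #H = lift.{1} θ ∧ (⋂ y ∈ H, B y).Nonempty := by
  obtain ⟨e⟩ : Nonempty (Iio θ.ord ↪ Y) := by
    rw [← le_def, mk_Iio_ordinal, card_ord]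
    exact hY
  let g : Ordinal.{0} → Ordinal.{0} := fun i => if hi : i < θ.ord then e ⟨i, hi⟩ else 0
  have hg : ∀ i (hi : i < θ.ord), g i = e ⟨i, hi⟩ := fun i hi => dif_pos hi
  have hinj : InjOn g (Iio θ.ord) := fun i hi j hj hij => by
    rw [hg i hi, hg j hj] at hij
    exact congrArg Subtype.val (e.injective (Subtype.ext hij))
  obtain ⟨H, hHθ, hH, hne⟩ := hθ (fun i => B (g i)) fun i hi => hg i hi ▸ hB _ (e ⟨i, hi⟩).2
  refine ⟨g '' H, ?_, ?_, ?_⟩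
  · rintro _ ⟨i, hi, rfl⟩
    rw [hg i (hHθ hi)]
    exact (e _).2
  · rw [mk_image_eq_of_injOn g H (hinj.mono hHθ), hH]
  · rwa [biInter_image]

theorem aleph0_le_regI {θ : Cardinal.{0}} (hθ : θ.IsRegular) (hθreg : ThetaRegular A I θ) :
    ℵ₀ ≤ regI A I :=
  (csInf_mem (⟨θ, hθ, hθreg⟩ : {θ | θ.IsRegular ∧ ThetaRegular A I θ}.Nonempty)).1.aleph0_le

end Ideal

/-- The least element of `X` above `ξ` (junk value `0` if there is none). -/
def succIn (X : Set Ordinal.{0}) (ξ : Ordinal.{0}) : Ordinal.{0} :=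
  sInf {ζ ∈ X | ξ < ζ}

section Sandwich

variable {X : Set Ordinal.{0}} {ξ ζ : Ordinal.{0}}

theorem succIn_mem (hζ : ζ ∈ X) (hξζ : ξ < ζ) : succIn X ξ ∈ X ∧ ξ < succIn X ξ :=
  csInf_mem (⟨ζ, hζ, hξζ⟩ : {ζ ∈ X | ξ < ζ}.Nonempty)

theorem succIn_le (hζ : ζ ∈ X) (hξζ : ξ < ζ) : succIn X ξ ≤ ζ :=
  csInf_le' ⟨hζ, hξζ⟩

def sandwichSet (f h : Ordinal.{0} → Ordinal.{0} → Ordinal.{0}) (η : Ordinal.{0} → Ordinal.{0})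
    (X : Set Ordinal.{0}) (Z : Ordinal.{0} → Set Ordinal.{0}) (ξ : Ordinal.{0}) :
    Set Ordinal.{0} :=
  {a ∈ A | f ξ a < h ξ a ∧ h ξ a < f (η ξ) a ∧ f (η ξ) a < f (succIn X ξ) a ∧
    a ∉ Z ξ ∪ Z (succIn X ξ)}

variable {A I} {D : Set (Set Ordinal.{0})} {f h : Ordinal.{0} → Ordinal.{0} → Ordinal.{0}}
  {η : Ordinal.{0} → Ordinal.{0}} {Z : Ordinal.{0} → Set Ordinal.{0}}

theorem sandwichSet_mem (hI : IsIdealOn A I) (hD : IsUltrafilterOn A D) (hDI : D ∩ I = ∅)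
    (hlo : ltD A D (f ξ) (h ξ)) (hhi : ltD A D (h ξ) (f (η ξ)))
    (hsucc : ltI A I (f (η ξ)) (f (succIn X ξ))) (hZξ : Z ξ ∈ I) (hZsucc : Z (succIn X ξ) ∈ I) :
    sandwichSet A f h η X Z ξ ∈ D := by
  have hZ : A \ (Z ξ ∪ Z (succIn X ξ)) ∈ D := hD.diff_mem hI hDI (hI.union_mem _ hZξ _ hZsucc)
  have hall := hD.inter_mem _ hlo _ (hD.inter_mem _ hhi _
    (hD.inter_mem _ (hD.ltD_of_ltI hI hDI hsucc) _ hZ))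
  refine hD.superset_mem _ hall _ ?_ fun a ha => ha.1
  rintro a ⟨⟨ha, h₁⟩, ⟨-, h₂⟩, ⟨-, h₃⟩, -, h₄⟩
  exact ⟨ha, h₁, h₂, h₃, h₄⟩

theorem lt_of_mem_sandwichSet
    (hZ : ∀ ρ ∈ X, ∀ σ ∈ X, ρ < σ → ∀ a ∈ A \ (Z ρ ∪ Z σ), f ρ a < f σ a)
    (hζ : ζ ∈ X) (hξζ : ξ < ζ) {a : Ordinal.{0}} (haξ : a ∈ sandwichSet A f h η X Z ξ)
    (haζ : a ∈ sandwichSet A f h η X Z ζ) : h ξ a < h ζ a := by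
  obtain ⟨ha, -, h₁, h₂, hZξ⟩ := haξ
  obtain ⟨-, h₃, -, -, hZζ⟩ := haζ
  have hsucc : f (succIn X ξ) a ≤ f ζ a := by
    rcases (succIn_le hζ hξζ).eq_or_lt with heq | hlt
    · rw [heq]
    · refine (hZ _ (succIn_mem hζ hξζ).1 _ hζ hlt a ⟨ha, ?_⟩).le
      rintro (hs | hz)
      exacts [hZξ (Or.inr hs), hZζ (Or.inl hz)]
  calc h ξ a < f (η ξ) a := h₁
    _ < f (succIn X ξ) a := h₂
    _ ≤ f ζ a := hsucc
    _ < h ζ a := h₃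

end Sandwich

theorem star_implies_not_bad_general (A : Set Ordinal.{0}) (I : Set (Set Ordinal.{0}))
    (hI : IsIdealOn A I)
    (lam θ : Cardinal.{0}) (hlam : lam.IsRegular) (hθ : θ.IsRegular)
    (hreglam : regI A I < lam)
    (hθreg : ThetaRegular A I θ)
    (f : Ordinal.{0} → Ordinal.{0} → Ordinal.{0})
    (hf : IncreasingModI A I lam.ord f)
    (hstar : Star A I lam.ord θ f) :
    ¬ BadAt A I lam.ord f θ := by
  rintro ⟨S, D, hS, hD, hDI, hbad⟩
  choose! h hhS η hη hlo hhi using hbad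
  have hℵ₀ : ℵ₀ < lam := (aleph0_le_regI hθ hθreg).trans_lt hreglam
  obtain ⟨X, hXclosed, hX, Z, hZI, hZ⟩ :=
    hstar _ (fun _ hξ => hξ.1) (exists_closure_point_ge hlam hℵ₀ hη)
  have hpos : ∀ ξ ∈ {ξ ∈ X | ∃ ζ ∈ X, ξ < ζ}, IsPositive A I (sandwichSet A f h η X Z ξ) := by
    rintro ξ ⟨hξX, ζ, hζX, hξζ⟩
    obtain ⟨hsX, hξs⟩ := succIn_mem hζX hξζ
    obtain ⟨hξ, -⟩ := hXclosed hξX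
    obtain ⟨hs, hsclosed⟩ := hXclosed hsX
    exact hD.isPositive_of_mem hDI <| sandwichSet_mem hI hD hDI (hlo ξ hξ) (hhi ξ hξ)
      (hf _ (hη ξ hξ) _ hs (hsclosed ξ hξs)) (hZI ξ hξX) (hZI _ hsX)
  have hθℵ₀ : ℵ₀ ≤ lift.{1} θ := aleph0_le_lift.2 hθ.aleph0_le
  obtain ⟨H, hHX, hH, a, ha⟩ := hθreg.exists_subset_nonempty_biInter
    (by rw [mk_sep_exists_gt_eq (hX ▸ hθℵ₀), hX]) hpos
  rw [mem_iInter₂] at ha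
  obtain ⟨ξ₀, hξ₀⟩ : H.Nonempty := by
    rw [← nonempty_coe_sort, ← mk_ne_zero_iff, hH]
    exact (aleph0_pos.trans_le hθℵ₀).ne'
  have haA : a ∈ A := (ha ξ₀ hξ₀).1
  have hmono : StrictMonoOn (fun ξ => h ξ a) H := fun ξ hξ ζ hζ hξζ =>
    lt_of_mem_sandwichSet hZ (hHX hζ).1 hξζ (ha ξ hξ) (ha ζ hζ)
  have hle : lift.{1} θ ≤ #(S a) := hH ▸ mk_le_mk_of_injOn_mapsTo hmono.injOn
    fun ξ hξ => hhS ξ (hXclosed (hHX hξ).1).1 a haA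
  exact (hS a haA).not_ge hle

/-- a sequence satisfying `(*)_θ`, for `θ` with `I` `θ`-regular, is not `Bad_θ`. -/
theorem star_implies_not_bad (A : Set Ordinal.{0}) (I : Set (Set Ordinal.{0}))
    (hI : IsIdealOn A I) (hmin : (regI A I).ord < sInf A)
    (lam θ : Cardinal.{0}) (hlam : lam.IsRegular) (hθ : θ.IsRegular)
    (hreglam : regI A I < lam) (hθlam : θ ≤ lam)
    (hθreg : ThetaRegular A I θ)
    (f : Ordinal.{0} → Ordinal.{0} → Ordinal.{0})
    (hf : IncreasingModI A I lam.ord f)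
    (hstar : Star A I lam.ord θ f) :
    ¬ BadAt A I lam.ord f θ :=
  star_implies_not_bad_general A I hI lam θ hlam hθ hreglam hθreg f hf hstar

end PCFPaper
end
end

section
/- Let A be a collection of regular cardinals with no maximum element, and let I be an ideal on A with wsat(I) < min(A) (A is weakly progressive over I). Suppose λ ∈ pcf_I(A) has a universal cofinal sequence f⃗ = ⟨f_ξ : ξ < λ⟩ that has a J_{<λ}^I-exact upper bound f. Then the set B = {a ∈ A : f(a) = a} is a generator for J_{<λ⁺}^I[A], i.e. J_{<λ⁺}^I[A] is the ideal generated by J_{<λ}^I[A] ∪ {B}. -/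
noncomputable section

namespace PCFPaper

open Set

variable (A : Set Ordinal.{0}) (I : Set (Set Ordinal.{0}))

/-!
Write `J = J_{<λ}` and `B = {a ∈ A : g a = a}`. An ultrafilter `D` disjoint from `I` that meets
`J` has `cf (∏ A / D) < λ`, so only ultrafilters avoiding `J` matter. If such a `D` contains `B`,
every `h ∈ ∏ A`, replaced by `0` off `B`, lies `<_J g`, hence below some `f ξ` modulo `J` by
exactness; so `⟨f ξ⟩` is cofinal mod `D` and `cf (∏ A / D) ≤ λ`. If `cf (∏ A / D) = λ` but
`B ∉ D`, then `g < id` on a set in `D`, so by universality `g` is bounded mod `D` by some `f ξ`,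
contradicting `f ξ <_J f (ξ + 1) ≤_J g`.
-/

variable {A I}

theorem IsRegularCardSet.isSuccLimit (hA : IsRegularCardSet A) :
    ∀ a ∈ A, Order.IsSuccLimit a := by
  rintro _ ha
  obtain ⟨c, hc, rfl⟩ := hA _ ha
  exact Cardinal.isSuccLimit_ord hc.aleph0_le

theorem exists_mem_prodSet_forall_lt (hA : ∀ a ∈ A, Order.IsSuccLimit a) (n : ℕ)
    {F : Ordinal.{0} → Ordinal.{0} → Ordinal.{0}} (hF : ∀ i < (n : Ordinal), F i ∈ prodSet A) :
    ∃ g ∈ prodSet A, ∀ i < (n : Ordinal), ∀ a ∈ A, F i a < g a := by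
  have hnat : ∀ i < (n : Ordinal), ∃ m < n, (m : Ordinal) = i := fun i hi => by
    obtain ⟨m, rfl⟩ := Ordinal.lt_omega0.1 (hi.trans (Ordinal.natCast_lt_omega0 n))
    exact ⟨m, by exact_mod_cast hi, rfl⟩
  refine ⟨fun a => (Finset.range n).sup fun m => Order.succ (F m a), fun a ha => ?_, ?_⟩
  · refine (Finset.sup_lt_iff (hA a ha).pos).2 fun m hm => (hA a ha).succ_lt ?_
    exact hF m (by exact_mod_cast Finset.mem_range.1 hm) a ha
  · intro i hi a _
    obtain ⟨m, hm, rfl⟩ := hnat i hi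
    exact (Order.lt_succ _).trans_le
      (Finset.le_sup (f := fun m : ℕ => Order.succ (F m a)) (Finset.mem_range.2 hm))

section Ultrafilter

variable {D : Set (Set Ordinal.{0})} (hD : IsUltrafilterOn A D)
include hD

theorem IsUltrafilterOn.nonempty_of_mem {X : Set Ordinal.{0}} (hX : X ∈ D) : X.Nonempty :=
  nonempty_iff_ne_empty.2 fun h => hD.empty_not_mem (h ▸ hX)

theorem IsUltrafilterOn.mem_of_union_mem {X Y : Set Ordinal.{0}} (hXY : X ∪ Y ∈ D)
    (hX : X ∉ D) (hY : Y ⊆ A) : Y ∈ D := by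
  refine (hD.mem_or_compl_mem X ((subset_union_left).trans (hD.subset_of_mem _ hXY))).elim
    (fun h => absurd h hX) fun h => hD.superset_mem _ (hD.inter_mem _ hXY _ h) _ ?_ hY
  rintro a ⟨ha | ha, -, haX⟩
  exacts [absurd ha haX, ha]

theorem IsUltrafilterOn.setOf_and_mem {P Q : Ordinal.{0} → Prop}
    (hP : {a | a ∈ A ∧ P a} ∈ D) (hQ : {a | a ∈ A ∧ Q a} ∈ D) :
    {a | a ∈ A ∧ P a ∧ Q a} ∈ D := by
  convert hD.inter_mem _ hP _ hQ using 1
  ext a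
  simp only [mem_ofPred_eq, mem_inter_iff]
  tauto

theorem IsUltrafilterOn.exists_of_setOf_mem {P : Ordinal.{0} → Prop}
    (hP : {a | a ∈ A ∧ P a} ∈ D) : ∃ a ∈ A, P a :=
  hD.nonempty_of_mem hP

theorem IsUltrafilterOn.setOf_mem_of_not_mem {P : Ordinal.{0} → Prop}
    (h : {a | a ∈ A ∧ ¬ P a} ∉ D) : {a | a ∈ A ∧ P a} ∈ D := by
  refine (hD.mem_or_compl_mem _ fun a ha => ha.1).resolve_right ?_
  convert h using 2
  ext a
  simp only [mem_sdiff, mem_ofPred_eq]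
  tauto

end Ultrafilter

section Jlt

variable {lam : Cardinal.{0}} {D : Set (Set Ordinal.{0})} {X Y : Set Ordinal.{0}}

theorem cfProd_lt_of_mem_Jlt (hD : IsUltrafilterOn A D) (hDI : D ∩ I = ∅)
    (hX : X ∈ Jlt A I lam) (hXD : X ∈ D) : cfProd A D < lam :=
  hX.2.resolve_left (fun hXI => (hDI.subset ⟨hXD, hXI⟩ : X ∈ (∅ : Set _))) D hD hDI hXD

theorem Jlt_union_mem (hX : X ∈ Jlt A I lam) (hY : Y ∈ Jlt A I lam) :
    X ∪ Y ∈ Jlt A I lam := by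
  refine ⟨union_subset hX.1 hY.1, Or.inr fun D hD hDI hXYD => ?_⟩
  by_cases hXD : X ∈ D
  · exact cfProd_lt_of_mem_Jlt hD hDI hX hXD
  · exact cfProd_lt_of_mem_Jlt hD hDI hY (hD.mem_of_union_mem hXYD hXD hY.1)

variable (hI : IsIdealOn A I)
include hI

theorem Jlt_mem_of_subset (hX : X ∈ Jlt A I lam) (hYX : Y ⊆ X) : Y ∈ Jlt A I lam := by
  refine ⟨hYX.trans hX.1, hX.2.imp (fun hXI => hI.mem_of_subset X hXI Y hYX) ?_⟩
  exact fun h D hD hDI hYD => h D hD hDI (hD.superset_mem Y hYD X hYX hX.1)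

theorem ltI_Jlt_of_ltI_of_leI {f f' g : Ordinal.{0} → Ordinal.{0}}
    (h₁ : ltI A (Jlt A I lam) f f') (h₂ : leI A (Jlt A I lam) f' g) :
    ltI A (Jlt A I lam) f g := by
  refine Jlt_mem_of_subset hI (Jlt_union_mem h₁ h₂) fun a ⟨ha, hfg⟩ => ?_
  rcases lt_or_ge (f a) (f' a) with hff' | hf'f
  · exact Or.inr ⟨ha, fun hf'g => hfg (hff'.trans_le hf'g)⟩
  · exact Or.inl ⟨ha, hf'f.not_gt⟩

theorem ltI_Jlt_of_isUBseq {μ : Ordinal.{0}} (hμ : Order.IsSuccLimit μ)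
    {f : Ordinal.{0} → Ordinal.{0} → Ordinal.{0}} {g : Ordinal.{0} → Ordinal.{0}}
    (hinc : IncreasingModI A (Jlt A I lam) μ f) (hub : IsUBseq A (Jlt A I lam) μ f g)
    {ξ : Ordinal.{0}} (hξ : ξ < μ) : ltI A (Jlt A I lam) (f ξ) g :=
  ltI_Jlt_of_ltI_of_leI hI (hinc ξ hξ _ (hμ.succ_lt hξ) (Order.lt_succ ξ))
    (hub _ (hμ.succ_lt hξ))

end Jlt

section UniversalSequence

variable {lam : Cardinal.{0}} {f : Ordinal.{0} → Ordinal.{0} → Ordinal.{0}}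
  {D : Set (Set Ordinal.{0})}

theorem aleph0_le_of_cofinal (hA : ∀ a ∈ A, Order.IsSuccLimit a) (hD : IsUltrafilterOn A D)
    (hf : ∀ ξ < lam.ord, f ξ ∈ prodSet A)
    (hcof : ∀ h ∈ prodSet A, ∃ ξ < lam.ord, leD A D h (f ξ)) : Cardinal.aleph0 ≤ lam := by
  by_contra! hlt
  obtain ⟨n, rfl⟩ := Cardinal.lt_aleph0.1 hlt
  rw [Cardinal.ord_natCast] at hf hcof
  obtain ⟨g, hg, hgf⟩ := exists_mem_prodSet_forall_lt hA n hf
  obtain ⟨ξ, hξ, hle⟩ := hcof g hg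
  obtain ⟨a, ha, hga⟩ := hD.exists_of_setOf_mem hle
  exact (hgf ξ hξ a ha).not_ge hga

variable (hI : IsIdealOn A I) (hA : ∀ a ∈ A, Order.IsSuccLimit a)
  (hlim : Order.IsSuccLimit lam.ord) (hf : IsUniversalSequence A I lam f)
  {g : Ordinal.{0} → Ordinal.{0}} (hg : IsEUBseq A (Jlt A I lam) lam.ord f g)
include hI hlim hf hg

include hA in
theorem setOf_eq_self_mem_of_cfProd_eq (hD : IsUltrafilterOn A D) (hDI : D ∩ I = ∅)
    (hcf : cfProd A D = lam) : {a | a ∈ A ∧ g a = a} ∈ D := by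
  have hDJ : ∀ Z ∈ D, Z ∉ Jlt A I lam := fun Z hZD hZ =>
    (cfProd_lt_of_mem_Jlt hD hDI hZ hZD).ne hcf
  have hid : IsUBseq A (Jlt A I lam) lam.ord f id := fun ξ hξ => by
    have hempty : {a | a ∈ A ∧ ¬ f ξ a ≤ a} = ∅ :=
      eq_empty_of_forall_notMem fun a ⟨ha, hfa⟩ => hfa (hf.1 ξ hξ a ha).le
    show {a | a ∈ A ∧ ¬ f ξ a ≤ a} ∈ Jlt A I lam
    rw [hempty]
    exact ⟨empty_subset A, Or.inl hI.empty_mem⟩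
  have hgle : {a | a ∈ A ∧ g a ≤ a} ∈ D :=
    hD.setOf_mem_of_not_mem fun h => hDJ _ h (hg.1.2 id hid)
  by_contra hB
  have hglt : {a | a ∈ A ∧ g a < a} ∈ D := by
    refine hD.superset_mem _ (hD.setOf_and_mem hgle
      (hD.setOf_mem_of_not_mem (P := fun a => g a ≠ a) (by simpa using hB))) _ ?_ fun a ha => ha.1
    exact fun a ⟨ha, hle, hne⟩ => ⟨ha, hle.lt_of_ne hne⟩
  classical
  let h : Ordinal.{0} → Ordinal.{0} := fun a => if g a < a then g a else 0
  have hh : h ∈ prodSet A := fun a ha => by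
    by_cases hga : g a < a
    · simp [h, hga]
    · simpa [h, hga] using (hA a ha).pos
  obtain ⟨ξ, hξ, hhf⟩ := hf.2.2 D hD hDI hcf h hh
  have hfg : {a | a ∈ A ∧ f ξ a < g a} ∈ D :=
    hD.setOf_mem_of_not_mem fun hc => hDJ _ hc (ltI_Jlt_of_isUBseq hI hlim hf.2.1 hg.1.1 hξ)
  obtain ⟨a, -, hga, hhfa, hfga⟩ :=
    hD.exists_of_setOf_mem (hD.setOf_and_mem hglt (hD.setOf_and_mem hhf hfg))
  simp only [h, if_pos hga] at hhfa
  exact hhfa.not_gt hfga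

theorem cfProd_le_of_setOf_eq_self_mem (hD : IsUltrafilterOn A D)
    (hDJ : ∀ Z ∈ D, Z ∉ Jlt A I lam) (hB : {a | a ∈ A ∧ g a = a} ∈ D) : cfProd A D ≤ lam := by
  classical
  refine csInf_le' ⟨f, hf.1, fun h hh => ?_⟩
  let h' : Ordinal.{0} → Ordinal.{0} := fun a => if g a = a then h a else 0
  have hgpos : ltI A (Jlt A I lam) (fun _ => 0) g :=
    Jlt_mem_of_subset hI (ltI_Jlt_of_isUBseq hI hlim hf.2.1 hg.1.1 hlim.pos)
      fun a ⟨ha, hga⟩ => ⟨ha, fun h0 => hga (zero_le.trans_lt h0)⟩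
  have hh'g : ltI A (Jlt A I lam) h' g := by
    refine Jlt_mem_of_subset hI hgpos fun a ⟨ha, hh'a⟩ => ⟨ha, fun hga => hh'a ?_⟩
    by_cases hgaa : g a = a
    · simpa [h', hgaa] using hh a ha
    · simpa [h', hgaa] using hga
  obtain ⟨ξ, hξ, hh'f⟩ := hg.2 h' hh'g
  refine ⟨ξ, hξ, hD.superset_mem _ (hD.setOf_and_mem hB
    (hD.setOf_mem_of_not_mem fun hc => hDJ _ hc hh'f)) _ ?_ fun a ha => ha.1⟩
  rintro a ⟨ha, hgaa, hle⟩
  exact ⟨ha, by simpa [h', hgaa] using hle⟩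

include hA in
theorem sdiff_setOf_eq_self_mem_Jlt {X : Set Ordinal.{0}} (hX : X ∈ Jlt A I (Order.succ lam)) :
    X \ {a | a ∈ A ∧ g a = a} ∈ Jlt A I lam := by
  refine ⟨sdiff_subset.trans hX.1, ?_⟩
  refine hX.2.imp (fun hXI => hI.mem_of_subset X hXI _ sdiff_subset) fun hX' D hD hDI hXBD => ?_
  have hle := Order.lt_succ_iff.1 (hX' D hD hDI (hD.superset_mem _ hXBD _ sdiff_subset hX.1))
  refine hle.lt_of_ne fun hcf => ?_
  obtain ⟨a, ⟨-, haB⟩, haB'⟩ := hD.nonempty_of_mem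
    (hD.inter_mem _ hXBD _ (setOf_eq_self_mem_of_cfProd_eq hI hA hlim hf hg hD hDI hcf))
  exact haB haB'

theorem mem_Jlt_succ_of_subset_union {X Y : Set Ordinal.{0}} (hXA : X ⊆ A)
    (hY : Y ∈ Jlt A I lam) (hXY : X ⊆ Y ∪ {a | a ∈ A ∧ g a = a}) :
    X ∈ Jlt A I (Order.succ lam) := by
  refine ⟨hXA, Or.inr fun D hD hDI hXD => ?_⟩
  by_cases hDJ : ∃ Z ∈ D, Z ∈ Jlt A I lam
  · obtain ⟨Z, hZD, hZ⟩ := hDJ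
    exact (cfProd_lt_of_mem_Jlt hD hDI hZ hZD).trans (Order.lt_succ lam)
  push Not at hDJ
  have hBD : {a | a ∈ A ∧ g a = a} ∈ D := hD.mem_of_union_mem
    (hD.superset_mem _ hXD _ hXY (union_subset hY.1 fun a ha => ha.1))
    (fun hYD => hDJ Y hYD hY) fun a ha => ha.1
  exact Order.lt_succ_iff.2 (cfProd_le_of_setOf_eq_self_mem hI hlim hf hg hD hDJ hBD)

end UniversalSequence

theorem generator_of_eub_general (A : Set Ordinal.{0}) (I : Set (Set Ordinal.{0}))
    (hI : IsIdealOn A I) (hA : IsRegularCardSet A)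
    (lam : Cardinal.{0}) (hlam : lam ∈ pcf A I)
    (f : Ordinal.{0} → Ordinal.{0} → Ordinal.{0})
    (hf : IsUniversalSequence A I lam f)
    (g : Ordinal.{0} → Ordinal.{0})
    (hg : IsEUBseq A (Jlt A I lam) lam.ord f g) :
    Jlt A I (Order.succ lam) =
      generatedBy A (Jlt A I lam) {a | a ∈ A ∧ g a = a} := by
  have hlim : Order.IsSuccLimit lam.ord := by
    obtain ⟨D, hD, hDI, hcf⟩ := hlam
    exact Cardinal.isSuccLimit_ord
      (aleph0_le_of_cofinal hA.isSuccLimit hD hf.1 (hf.2.2 D hD hDI hcf))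
  ext X
  constructor
  · intro hX
    exact ⟨hX.1, _, sdiff_setOf_eq_self_mem_Jlt hI hA.isSuccLimit hlim hf hg hX,
      subset_sdiff_union X _⟩
  · rintro ⟨hXA, Y, hY, hXY⟩
    exact mem_Jlt_succ_of_subset_union hI hlim hf hg hXA hY hXY

/-- an exact upper bound of a universal cofinal sequence yields a
generator `B = {a ∈ A : g a = a}` for `J_{<λ⁺}^I [A]`. -/
theorem generator_of_eub (A : Set Ordinal.{0}) (I : Set (Set Ordinal.{0}))
    (hI : IsIdealOn A I) (hA : IsRegularCardSet A)
    (hnomax : ∀ a ∈ A, ∃ b ∈ A, a < b)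
    (hmin : (wsat A I).ord < sInf A)
    (lam : Cardinal.{0}) (hlam : lam ∈ pcf A I)
    (f : Ordinal.{0} → Ordinal.{0} → Ordinal.{0})
    (hf : IsUniversalSequence A I lam f)
    (g : Ordinal.{0} → Ordinal.{0})
    (hg : IsEUBseq A (Jlt A I lam) lam.ord f g) :
    Jlt A I (Order.succ lam) =
      generatedBy A (Jlt A I lam) {a | a ∈ A ∧ g a = a} :=
  generator_of_eub_general A I hI hA lam hlam f hf g hg

end PCFPaper
end
end
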